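/- arXiv:2004.11796 — 5 statements merged into one kernel-verified Lean document; each statement's English description precedes it below -/
import Mathlib

section
/- Let Ψ be a Max-2AND instance with m clauses. Then bias(Ψ) ≤ val_Ψ ≤ (m + bias(Ψ))/2. (Lemma 3.3, due to Guruswami–Velingker–Velusamy.) -/
/-- A `Max-2AND` clause: the conjunction of two (not necessarily distinct) literals.
A literal on variable `i` with polarity `b` (`b = true` for `xᵢ`, `b = false` for `¬xᵢ`)
evaluates to `σ i == b`. No clause contains both `xᵢ` and `¬xᵢ`: if the two literals
share a variable they have the same polarity. -/
structure AndClause (n : ℕ) where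
  i : Fin n
  bi : Bool
  j : Fin n
  bj : Bool
  consistent : i = j → bi = bj

/-- Evaluation of an AND clause under an assignment. -/
def AndClause.eval {n : ℕ} (C : AndClause n) (σ : Fin n → Bool) : Bool :=
  (σ C.i == C.bi) && (σ C.j == C.bj)

/-- The number of clauses of `Ψ` satisfied by `σ`, i.e. `val_Ψ(σ)`. -/
def satCount {n : ℕ} (Ψ : List (AndClause n)) (σ : Fin n → Bool) : ℕ :=
  Ψ.countP (fun C => C.eval σ)

/-- `val_Ψ`: the maximum number of simultaneously satisfiable clauses. -/
def maxVal {n : ℕ} (Ψ : List (AndClause n)) : ℕ :=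
  Finset.univ.sup (fun σ : Fin n → Bool => satCount Ψ σ)

/-- `pos_i(Ψ)`: the number of occurrences of the literal `xᵢ` among the `2m`
literal occurrences of `Ψ`. -/
def posCount {n : ℕ} (Ψ : List (AndClause n)) (v : Fin n) : ℕ :=
  (Ψ.map (fun C => (if C.i = v ∧ C.bi = true then 1 else 0)
                 + (if C.j = v ∧ C.bj = true then 1 else 0))).sum

/-- `neg_i(Ψ)`: the number of occurrences of the literal `¬xᵢ`. -/
def negCount {n : ℕ} (Ψ : List (AndClause n)) (v : Fin n) : ℕ :=
  (Ψ.map (fun C => (if C.i = v ∧ C.bi = false then 1 else 0)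
                 + (if C.j = v ∧ C.bj = false then 1 else 0))).sum

/-- `bias(Ψ) = (1/2) Σᵢ |posᵢ(Ψ) − negᵢ(Ψ)|`. -/
noncomputable def bias {n : ℕ} (Ψ : List (AndClause n)) : ℝ :=
  (1/2) * ∑ v : Fin n, |(posCount Ψ v : ℝ) - (negCount Ψ v : ℝ)|

/-!
Let `T(σ)` be the number of literal occurrences made true by the assignment `σ`. A satisfied
clause has two of them and an unsatisfied one at most one, so `2 val(σ) ≤ T(σ) ≤ m + val(σ)`.
On the other hand `T(σ) = Σᵢ (posᵢ or negᵢ, as σ chooses) ≤ Σᵢ max(posᵢ, negᵢ) = m + bias(Ψ)`,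
with equality for the majority assignment. The majority assignment gives the lower bound and
an optimal assignment the upper one.
-/

def AndClause.litCount {n : ℕ} (C : AndClause n) (v : Fin n) (b : Bool) : ℕ :=
  (if C.i = v ∧ C.bi = b then 1 else 0) + (if C.j = v ∧ C.bj = b then 1 else 0)

def AndClause.trueLitCount {n : ℕ} (C : AndClause n) (σ : Fin n → Bool) : ℕ :=
  (if σ C.i = C.bi then 1 else 0) + (if σ C.j = C.bj then 1 else 0)

theorem Finset.sum_list_map_comm {ι α M : Type*} [AddCommMonoid M] (s : Finset ι) (l : List α)
    (f : ι → α → M) :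
    ∑ i ∈ s, (l.map (f i)).sum = (l.map fun a => ∑ i ∈ s, f i a).sum := by
  simpa using (Multiset.sum_map_sum (m := (l : Multiset α)) (s := s) (f := fun a i => f i a)).symm

theorem List.countP_eq_sum_map_toNat {α : Type*} (l : List α) (p : α → Bool) :
    l.countP p = (l.map fun a => (p a).toNat).sum := by
  induction l with
  | nil => rfl
  | cons a l ih => simp [List.countP_cons, ih, Bool.toNat, add_comm]

theorem Fintype.sum_ite_eq_and_eq_apply {ι β : Type*} [Fintype ι] [DecidableEq ι]
    [DecidableEq β] (σ : ι → β) (i : ι) (b : β) :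
    ∑ v, (if i = v ∧ b = σ v then 1 else 0 : ℕ) = if σ i = b then 1 else 0 := by
  have h : ∀ v, (i = v ∧ b = σ v) ↔ (i = v ∧ σ i = b) := by
    rintro v; constructor <;> rintro ⟨rfl, h⟩ <;> exact ⟨rfl, h.symm⟩
  simp_rw [h, ite_and, Finset.sum_ite_eq, Finset.mem_univ, if_true]

namespace AndClause

variable {n : ℕ} (C : AndClause n) (σ : Fin n → Bool)

theorem sum_litCount_apply : ∑ v, C.litCount v (σ v) = C.trueLitCount σ := by
  simp only [litCount, trueLitCount, Finset.sum_add_distrib, Fintype.sum_ite_eq_and_eq_apply]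

theorem trueLitCount_add_trueLitCount_not : C.trueLitCount σ + C.trueLitCount (!σ ·) = 2 := by
  have hlit : ∀ a b : Bool, (if a = b then 1 else 0) + (if (!a) = b then 1 else 0) = 1 := by
    decide
  have := hlit (σ C.i) C.bi
  have := hlit (σ C.j) C.bj
  simp only [trueLitCount]
  omega

theorem two_mul_toNat_eval_le_trueLitCount : 2 * (C.eval σ).toNat ≤ C.trueLitCount σ := by
  have key : ∀ a b c d : Bool, 2 * ((a == b) && (c == d)).toNat ≤
      (if a = b then 1 else 0) + (if c = d then 1 else 0) := by
    decide
  exact key _ _ _ _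

theorem trueLitCount_le_one_add_toNat_eval : C.trueLitCount σ ≤ 1 + (C.eval σ).toNat := by
  have key : ∀ a b c d : Bool, (if a = b then 1 else 0) + (if c = d then 1 else 0) ≤
      1 + ((a == b) && (c == d)).toNat := by
    decide
  exact key _ _ _ _

end AndClause

section

variable {n : ℕ} (Ψ : List (AndClause n)) (σ : Fin n → Bool)

def litCount (v : Fin n) (b : Bool) : ℕ := (Ψ.map (·.litCount v b)).sum

def trueLitCount : ℕ := (Ψ.map (·.trueLitCount σ)).sum

theorem litCount_true (v : Fin n) : litCount Ψ v true = posCount Ψ v := rfl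

theorem litCount_false (v : Fin n) : litCount Ψ v false = negCount Ψ v := rfl

def majority : Fin n → Bool := fun v => decide (negCount Ψ v ≤ posCount Ψ v)

def majorityCount : ℕ := ∑ v, max (posCount Ψ v) (negCount Ψ v)

theorem sum_litCount_apply : ∑ v, litCount Ψ v (σ v) = trueLitCount Ψ σ := by
  simp only [litCount, trueLitCount, Finset.sum_list_map_comm, AndClause.sum_litCount_apply]

theorem trueLitCount_add_trueLitCount_not :
    trueLitCount Ψ σ + trueLitCount Ψ (!σ ·) = 2 * Ψ.length := by
  simp [trueLitCount, ← List.sum_map_add, AndClause.trueLitCount_add_trueLitCount_not, mul_comm]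

-- Every literal occurrence is true under exactly one of the two constant assignments.
theorem sum_posCount_add_negCount : ∑ v, (posCount Ψ v + negCount Ψ v) = 2 * Ψ.length :=
  calc ∑ v, (posCount Ψ v + negCount Ψ v)
      = ∑ v, litCount Ψ v true + ∑ v, litCount Ψ v (!true) := by
        simp only [litCount_true, Bool.not_true, litCount_false, Finset.sum_add_distrib]
    _ = trueLitCount Ψ (fun _ => true) + trueLitCount Ψ (fun _ => !true) :=
      congrArg₂ (· + ·) (sum_litCount_apply Ψ _) (sum_litCount_apply Ψ _)
    _ = 2 * Ψ.length := trueLitCount_add_trueLitCount_not Ψ _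

theorem majorityCount_eq_length_add_bias : (majorityCount Ψ : ℝ) = Ψ.length + bias Ψ := by
  have hmax : ∀ p q : ℕ, (max p q : ℝ) = ((p + q : ℝ) + |(p : ℝ) - q|) / 2 := by
    intro p q
    rcases le_total (p : ℝ) q with h | h
    · rw [max_eq_right h, abs_of_nonpos (by linarith)]; ring
    · rw [max_eq_left h, abs_of_nonneg (by linarith)]; ring
  have htot : ∑ v, ((posCount Ψ v : ℝ) + negCount Ψ v) = 2 * Ψ.length := by
    exact_mod_cast sum_posCount_add_negCount Ψ
  simp only [majorityCount, bias, Nat.cast_sum, Nat.cast_max, hmax, ← Finset.sum_div,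
    Finset.sum_add_distrib, htot]
  ring

theorem trueLitCount_le_majorityCount : trueLitCount Ψ σ ≤ majorityCount Ψ := by
  rw [← sum_litCount_apply]
  refine Finset.sum_le_sum fun v _ => ?_
  cases σ v
  · simpa only [litCount_false] using le_max_right _ _
  · simpa only [litCount_true] using le_max_left _ _

theorem trueLitCount_majority : trueLitCount Ψ (majority Ψ) = majorityCount Ψ := by
  rw [← sum_litCount_apply]
  refine Finset.sum_congr rfl fun v _ => ?_
  by_cases h : negCount Ψ v ≤ posCount Ψ v
  · simp [majority, h, litCount_true]
  · simp [majority, h, litCount_false, max_eq_right (not_le.1 h).le]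

theorem two_mul_satCount_le_trueLitCount : 2 * satCount Ψ σ ≤ trueLitCount Ψ σ := by
  rw [satCount, List.countP_eq_sum_map_toNat, ← List.sum_map_mul_left]
  exact List.sum_le_sum fun C _ => C.two_mul_toNat_eval_le_trueLitCount σ

theorem trueLitCount_le_length_add_satCount : trueLitCount Ψ σ ≤ Ψ.length + satCount Ψ σ :=
  calc trueLitCount Ψ σ ≤ (Ψ.map fun C => 1 + (C.eval σ).toNat).sum :=
        List.sum_le_sum fun C _ => C.trueLitCount_le_one_add_toNat_eval σ
    _ = Ψ.length + satCount Ψ σ := by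
        simp [List.sum_map_add, satCount, List.countP_eq_sum_map_toNat]

theorem satCount_le_maxVal : satCount Ψ σ ≤ maxVal Ψ :=
  Finset.le_sup (Finset.mem_univ σ)

theorem exists_satCount_eq_maxVal : ∃ σ, satCount Ψ σ = maxVal Ψ := by
  obtain ⟨σ, -, h⟩ := Finset.exists_mem_eq_sup Finset.univ Finset.univ_nonempty (satCount Ψ)
  exact ⟨σ, h.symm⟩

end

/-- Lemma 3.3 (Guruswami–Velingker–Velusamy): `bias(Ψ) ≤ val_Ψ ≤ (m + bias(Ψ))/2`. -/
theorem gvv17_bias_bounds {n : ℕ} (Ψ : List (AndClause n)) :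
    bias Ψ ≤ (maxVal Ψ : ℝ) ∧ (maxVal Ψ : ℝ) ≤ ((Ψ.length : ℝ) + bias Ψ) / 2 := by
  have hbias := majorityCount_eq_length_add_bias Ψ
  constructor
  · have h := trueLitCount_le_length_add_satCount Ψ (majority Ψ)
    rw [trueLitCount_majority] at h
    have hval : (satCount Ψ (majority Ψ) : ℝ) ≤ maxVal Ψ := by
      exact_mod_cast satCount_le_maxVal Ψ _
    have : (majorityCount Ψ : ℝ) ≤ Ψ.length + satCount Ψ (majority Ψ) := by exact_mod_cast h
    linarith
  · obtain ⟨σ, hσ⟩ := exists_satCount_eq_maxVal Ψ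
    have h := (two_mul_satCount_le_trueLitCount Ψ σ).trans (trueLitCount_le_majorityCount Ψ σ)
    rw [hσ] at h
    have : (2 * maxVal Ψ : ℝ) ≤ majorityCount Ψ := by exact_mod_cast h
    linarith
end

section
/- For all real numbers x ≥ 0 and y > 0, (2x + 3y + x²/y) / (4(x + y)) ≥ √2/2. (Claim 3.7.) -/
/-!
Clearing the denominator `y`, the quotient is `((x + y)² + 2y²) / (4 (x + y) y)`, and AM-GM applied to
`x + y` and `√2 y` gives `(x + y)² + 2y² ≥ 2√2 (x + y) y`, with equality at `x = (√2 - 1) y`.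
-/

open Real

lemma two_mul_sqrt_two_mul_le_sq_add_two_mul_sq (a b : ℝ) :
    2 * √2 * a * b ≤ a ^ 2 + 2 * b ^ 2 := by
  have amgm := two_mul_le_add_sq a (√2 * b)
  rw [mul_pow, sq_sqrt zero_le_two] at amgm
  linarith

lemma sqrt_two_div_two_le_sq_add_two_mul_sq_div {a b : ℝ} (hab : 0 < a * b) :
    √2 / 2 ≤ (a ^ 2 + 2 * b ^ 2) / (4 * (a * b)) := by
  rw [div_le_div_iff₀ two_pos (by positivity)]
  linarith [two_mul_sqrt_two_mul_le_sq_add_two_mul_sq a b]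

/-- Claim 3.7: for all `x ≥ 0`, `y > 0`, `(2x + 3y + x²/y) / (4(x + y)) ≥ √2/2`. -/
theorem claim_3_7 (x y : ℝ) (hx : 0 ≤ x) (hy : 0 < y) :
    Real.sqrt 2 / 2 ≤ (2 * x + 3 * y + x ^ 2 / y) / (4 * (x + y)) := by
  have hxy : 0 < x + y := by linarith
  have hquot : (2 * x + 3 * y + x ^ 2 / y) / (4 * (x + y))
      = ((x + y) ^ 2 + 2 * y ^ 2) / (4 * ((x + y) * y)) := by
    field_simp
    ring
  rw [hquot]
  exact sqrt_two_div_two_le_sq_add_two_mul_sq_div (mul_pos hxy hy)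
end

section
/- Let ε ∈ (0, 0.01) and δ = ε/2. Let Ψ be a Max-2AND instance with m clauses, and let B be a real number with (1−δ)·bias(Ψ) ≤ B ≤ (1+δ)·bias(Ψ). Define v = 2(m + B)/(9(1+δ)) if B ≤ (m/3)·(1−δ), and v = B/(1+δ) otherwise. Then v ≤ val_Ψ and v ≥ (4/9 − ε)·val_Ψ. (Correctness analysis of Algorithm 2 in Theorem 3.5, the (4/9 − ε)-approximation for Max-2AND.) -/
namespace AndClause

variable {n : ℕ}

def numTrueLits (C : AndClause n) (τ : Fin n → Bool) : ℕ :=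
  (if τ C.i = C.bi then 1 else 0) + (if τ C.j = C.bj then 1 else 0)

theorem two_mul_ite_eval_le_numTrueLits (C : AndClause n) (σ : Fin n → Bool) :
    2 * (if C.eval σ then 1 else 0) ≤ C.numTrueLits σ := by
  unfold eval numTrueLits
  by_cases hi : σ C.i = C.bi <;> by_cases hj : σ C.j = C.bj <;> simp [hi, hj]

theorem numTrueLits_le_ite_eval_add_one (C : AndClause n) (σ : Fin n → Bool) :
    C.numTrueLits σ ≤ (if C.eval σ then 1 else 0) + 1 := by
  unfold eval numTrueLits
  by_cases hi : σ C.i = C.bi <;> by_cases hj : σ C.j = C.bj <;> simp [hi, hj]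

theorem numTrueLits_add_numTrueLits_not (C : AndClause n) (τ : Fin n → Bool) :
    C.numTrueLits τ + C.numTrueLits (fun v => !τ v) = 2 := by
  have key : ∀ a b c d : Bool, ((if a = c then 1 else 0) + (if b = d then 1 else 0)) +
      ((if (!a) = c then 1 else 0) + (if (!b) = d then 1 else 0)) = 2 := by decide
  exact key _ _ _ _

theorem numTrueLits_eq_sum (C : AndClause n) (τ : Fin n → Bool) :
    C.numTrueLits τ = ∑ v, ((if C.i = v ∧ C.bi = τ v then 1 else 0) +
      (if C.j = v ∧ C.bj = τ v then 1 else 0)) := by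
  simp [numTrueLits, ite_and, Finset.sum_add_distrib, @eq_comm _ C.bi, @eq_comm _ C.bj]

-- Only meaningful at `C.i` and `C.j`.
def pol (C : AndClause n) (v : Fin n) : Bool :=
  if v = C.i then C.bi else C.bj

theorem eval_iff (C : AndClause n) (σ : Fin n → Bool) :
    C.eval σ ↔ ∀ v ∈ ({C.i, C.j} : Finset (Fin n)), σ v = C.pol v := by
  by_cases h : C.j = C.i
  · simp [eval, pol, h, C.consistent h.symm]
  · simp [eval, pol, h]

end AndClause

namespace Max2And

variable {n : ℕ}

def trueLitCount (Ψ : List (AndClause n)) (τ : Fin n → Bool) : ℕ :=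
  (Ψ.map (·.numTrueLits τ)).sum

def majority (Ψ : List (AndClause n)) (v : Fin n) : Bool :=
  decide (negCount Ψ v ≤ posCount Ψ v)

theorem two_mul_satCount_le_trueLitCount (Ψ : List (AndClause n)) (σ : Fin n → Bool) :
    2 * satCount Ψ σ ≤ trueLitCount Ψ σ := by
  induction Ψ with
  | nil => simp [satCount, trueLitCount]
  | cons C Ψ ih =>
    have := C.two_mul_ite_eval_le_numTrueLits σ
    simp only [satCount, trueLitCount, List.countP_cons, List.map_cons, List.sum_cons] at *
    omega

theorem trueLitCount_le_satCount_add_length (Ψ : List (AndClause n)) (σ : Fin n → Bool) :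
    trueLitCount Ψ σ ≤ satCount Ψ σ + Ψ.length := by
  induction Ψ with
  | nil => simp [satCount, trueLitCount]
  | cons C Ψ ih =>
    have := C.numTrueLits_le_ite_eval_add_one σ
    simp only [satCount, trueLitCount, List.countP_cons, List.map_cons, List.sum_cons,
      List.length_cons] at *
    omega

theorem trueLitCount_add_trueLitCount_not (Ψ : List (AndClause n)) (τ : Fin n → Bool) :
    trueLitCount Ψ τ + trueLitCount Ψ (fun v => !τ v) = 2 * Ψ.length := by
  induction Ψ with
  | nil => simp [trueLitCount]
  | cons C Ψ ih =>
    have := C.numTrueLits_add_numTrueLits_not τ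
    simp only [trueLitCount, List.map_cons, List.sum_cons, List.length_cons] at *
    omega

theorem trueLitCount_eq_sum (Ψ : List (AndClause n)) (τ : Fin n → Bool) :
    trueLitCount Ψ τ = ∑ v, if τ v then posCount Ψ v else negCount Ψ v := by
  induction Ψ with
  | nil => simp [trueLitCount, posCount, negCount]
  | cons C Ψ ih =>
    have hcons : ∀ v, (if τ v then posCount (C :: Ψ) v else negCount (C :: Ψ) v) =
        ((if C.i = v ∧ C.bi = τ v then 1 else 0) + (if C.j = v ∧ C.bj = τ v then 1 else 0)) +
          if τ v then posCount Ψ v else negCount Ψ v := by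
      intro v
      cases τ v <;> simp [posCount, negCount]
    simp only [hcons, Finset.sum_add_distrib, ← C.numTrueLits_eq_sum, ← ih]
    simp [trueLitCount]

theorem trueLitCount_le_trueLitCount_majority (Ψ : List (AndClause n)) (τ : Fin n → Bool) :
    trueLitCount Ψ τ ≤ trueLitCount Ψ (majority Ψ) := by
  simp only [trueLitCount_eq_sum, majority]
  gcongr with v
  by_cases h : negCount Ψ v ≤ posCount Ψ v <;> cases τ v <;> simp [h]; omega

theorem trueLitCount_majority (Ψ : List (AndClause n)) :
    (trueLitCount Ψ (majority Ψ) : ℝ) = Ψ.length + bias Ψ := by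
  have hsum : (trueLitCount Ψ (majority Ψ) : ℝ) + trueLitCount Ψ (fun v => !majority Ψ v) =
      2 * Ψ.length := by exact_mod_cast trueLitCount_add_trueLitCount_not Ψ (majority Ψ)
  have hmax : (trueLitCount Ψ (majority Ψ) : ℝ) = ∑ v, max (posCount Ψ v : ℝ) (negCount Ψ v) := by
    rw [trueLitCount_eq_sum, Nat.cast_sum]
    refine Finset.sum_congr rfl fun v _ => ?_
    by_cases h : negCount Ψ v ≤ posCount Ψ v <;> simp [majority, h]; omega
  have hmin : (trueLitCount Ψ (fun v => !majority Ψ v) : ℝ) =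
      ∑ v, min (posCount Ψ v : ℝ) (negCount Ψ v) := by
    rw [trueLitCount_eq_sum, Nat.cast_sum]
    refine Finset.sum_congr rfl fun v _ => ?_
    by_cases h : negCount Ψ v ≤ posCount Ψ v <;> simp [majority, h]; omega
  have hdiff : (trueLitCount Ψ (majority Ψ) : ℝ) - trueLitCount Ψ (fun v => !majority Ψ v) =
      2 * bias Ψ := by
    simp only [hmax, hmin, ← Finset.sum_sub_distrib, max_sub_min_eq_abs', bias]
    ring
  linarith

theorem bias_le_maxVal (Ψ : List (AndClause n)) : bias Ψ ≤ maxVal Ψ := by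
  have hsat : (trueLitCount Ψ (majority Ψ) : ℝ) ≤ maxVal Ψ + Ψ.length := by
    exact_mod_cast (trueLitCount_le_satCount_add_length Ψ _).trans
      (Nat.add_le_add_right (Finset.le_sup (Finset.mem_univ _)) _)
  linarith [trueLitCount_majority Ψ]

theorem two_mul_maxVal_le (Ψ : List (AndClause n)) : 2 * (maxVal Ψ : ℝ) ≤ Ψ.length + bias Ψ := by
  obtain ⟨σ, -, hσ⟩ := Finset.exists_mem_eq_sup Finset.univ Finset.univ_nonempty (satCount Ψ)
  rw [← trueLitCount_majority, maxVal, hσ]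
  exact_mod_cast (two_mul_satCount_le_trueLitCount Ψ σ).trans
    (trueLitCount_le_trueLitCount_majority Ψ σ)

theorem bias_nonneg (Ψ : List (AndClause n)) : 0 ≤ bias Ψ := by
  unfold bias
  positivity

end Max2And

section ProductWeight

variable {ι α : Type*} [Fintype ι] [DecidableEq ι] [Fintype α]

theorem Fintype.sum_prod_mul_prod_eq_prod_sum (p f : ι → α → ℝ) (hp : ∀ v, ∑ a, p v a = 1)
    (S : Finset ι) :
    ∑ σ : ι → α, (∏ v, p v (σ v)) * ∏ v ∈ S, f v (σ v) = ∏ v ∈ S, ∑ a, p v a * f v a := by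
  have hfactor : ∀ v, ∑ a, p v a * (if v ∈ S then f v a else 1) =
      if v ∈ S then ∑ a, p v a * f v a else 1 := by
    intro v
    split_ifs <;> simp [hp]
  simp_rw [← Fintype.prod_ite_mem S, ← Finset.prod_mul_distrib]
  rw [← Fintype.prod_sum (fun v a => p v a * if v ∈ S then f v a else 1)]
  simp_rw [hfactor]

end ProductWeight

namespace Max2And

open AndClause

variable {n : ℕ}

theorem sum_mul_satCount (w : (Fin n → Bool) → ℝ) (Ψ : List (AndClause n)) :
    ∑ σ, w σ * (satCount Ψ σ : ℝ) =
      (Ψ.map fun C => ∑ σ, w σ * if C.eval σ then 1 else 0).sum := by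
  induction Ψ with
  | nil => simp [satCount]
  | cons C Ψ ih =>
    simp only [satCount, List.countP_cons, List.map_cons, List.sum_cons, ← ih,
      ← Finset.sum_add_distrib, ← mul_add]
    refine Finset.sum_congr rfl fun σ _ => ?_
    split_ifs <;> push_cast <;> ring

noncomputable def majorityProb (Ψ : List (AndClause n)) (v : Fin n) (b : Bool) : ℝ :=
  if majority Ψ v = b then 2 / 3 else 1 / 3

theorem sum_majorityProb (Ψ : List (AndClause n)) (v : Fin n) : ∑ b, majorityProb Ψ v b = 1 := by
  cases h : majority Ψ v <;> simp [majorityProb, h] <;> norm_num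

theorem sum_prod_majorityProb_mul_ite_eval (Ψ : List (AndClause n)) (C : AndClause n) :
    ∑ σ : Fin n → Bool, (∏ v, majorityProb Ψ v (σ v)) * (if C.eval σ then 1 else 0) =
      ∏ v ∈ {C.i, C.j}, majorityProb Ψ v (C.pol v) := by
  have hind : ∀ σ : Fin n → Bool, (if C.eval σ then (1 : ℝ) else 0) =
      ∏ v ∈ {C.i, C.j}, if σ v = C.pol v then 1 else 0 := by
    intro σ
    simp only [Finset.prod_boole, ← C.eval_iff]
  simp_rw [hind]
  rw [Fintype.sum_prod_mul_prod_eq_prod_sum _ (fun v b => if b = C.pol v then 1 else 0)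
    (sum_majorityProb Ψ)]
  simp

theorem two_ninths_mul_numTrueLits_le (Ψ : List (AndClause n)) (C : AndClause n) :
    2 / 9 * (C.numTrueLits (majority Ψ) : ℝ) ≤ ∏ v ∈ {C.i, C.j}, majorityProb Ψ v (C.pol v) := by
  by_cases h : C.i = C.j
  · simp only [h, Finset.pair_eq_singleton, Finset.prod_singleton, pol, numTrueLits, majorityProb,
      C.consistent h]
    split_ifs <;> norm_num
  · rw [Finset.prod_pair h]
    simp only [pol, numTrueLits, majorityProb, if_pos, Ne.symm h, if_false]
    split_ifs <;> norm_num

theorem two_ninths_mul_le_maxVal (Ψ : List (AndClause n)) :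
    2 / 9 * (Ψ.length + bias Ψ) ≤ maxVal Ψ := by
  set w : (Fin n → Bool) → ℝ := fun σ => ∏ v, majorityProb Ψ v (σ v)
  have hw_nonneg : ∀ σ, 0 ≤ w σ := fun σ =>
    Finset.prod_nonneg fun v _ => by unfold majorityProb; split_ifs <;> norm_num
  have hw_sum : ∑ σ, w σ = 1 := by
    simp only [w, ← Fintype.prod_sum, sum_majorityProb, Finset.prod_const_one]
  calc 2 / 9 * (Ψ.length + bias Ψ)
      = (Ψ.map fun C => 2 / 9 * (C.numTrueLits (majority Ψ) : ℝ)).sum := by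
        rw [← trueLitCount_majority, trueLitCount, Nat.cast_list_sum, List.map_map,
          ← List.sum_map_mul_left]
        rfl
    _ ≤ (Ψ.map fun C => ∏ v ∈ {C.i, C.j}, majorityProb Ψ v (C.pol v)).sum :=
        List.sum_le_sum fun C _ => two_ninths_mul_numTrueLits_le Ψ C
    _ = ∑ σ, w σ * (satCount Ψ σ : ℝ) := by
        simp only [sum_mul_satCount, w, sum_prod_majorityProb_mul_ite_eval]
    _ ≤ ∑ σ, w σ * (maxVal Ψ : ℝ) := by
        gcongr with σ
        · exact hw_nonneg σ
        · exact Finset.le_sup (f := satCount Ψ) (Finset.mem_univ σ)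
    _ = maxVal Ψ := by rw [← Finset.sum_mul, hw_sum, one_mul]

section Estimate

variable {m b M δ B : ℝ}

theorem estimate_bounds_of_le (hm : 0 ≤ m) (hb : 0 ≤ b) (hMl : 2 / 9 * (m + b) ≤ M)
    (hMu : 2 * M ≤ m + b) (hδ0 : 0 ≤ δ) (hδ1 : δ ≤ 2 / 9)
    (hB1 : (1 - δ) * b ≤ B) (hB2 : B ≤ (1 + δ) * b) :
    2 * (m + B) / (9 * (1 + δ)) ≤ M ∧ (4 / 9 - 2 * δ) * M ≤ 2 * (m + B) / (9 * (1 + δ)) := by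
  have hpos : 0 < 9 * (1 + δ) := by linarith
  constructor
  · rw [div_le_iff₀ hpos]
    nlinarith [mul_nonneg hδ0 hm]
  · rw [le_div_iff₀ hpos]
    have hM : (4 / 9 - 2 * δ) * M ≤ (4 / 9 - 2 * δ) * ((m + b) / 2) :=
      mul_le_mul_of_nonneg_left (by linarith) (by linarith)
    nlinarith [mul_nonneg hδ0 hm, mul_nonneg hδ0 hb, mul_nonneg (mul_nonneg hδ0 hδ0) hm,
      mul_nonneg (mul_nonneg hδ0 hδ0) hb]

theorem estimate_bounds_of_lt (hb : 0 ≤ b) (hbM : b ≤ M) (hMu : 2 * M ≤ m + b)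
    (hδ0 : 0 ≤ δ) (hδ1 : δ ≤ 1) (hB1 : (1 - δ) * b ≤ B) (hB2 : B ≤ (1 + δ) * b)
    (hmB : m / 3 * (1 - δ) < B) :
    B / (1 + δ) ≤ M ∧ (4 / 9 - 2 * δ) * M ≤ B / (1 + δ) := by
  have hpos : 0 < 1 + δ := by linarith
  constructor
  · rw [div_le_iff₀ hpos]
    nlinarith [mul_le_mul_of_nonneg_left hbM hpos.le]
  · rw [le_div_iff₀ hpos]
    have hM : (1 - δ) * M ≤ 2 * B := by
      nlinarith [mul_le_mul_of_nonneg_left hMu (sub_nonneg.mpr hδ1)]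
    have hcoef : 2 * ((4 / 9 - 2 * δ) * (1 + δ)) ≤ 1 - δ := by nlinarith
    nlinarith [mul_le_mul_of_nonneg_right hcoef (hb.trans hbM)]

end Estimate

end Max2And

open Max2And in
/-- Correctness analysis of Algorithm 2 (Theorem 3.5): the `(4/9 − ε)`-approximation
for `Max-2AND`. Given `B ∈ (1 ± δ)·bias(Ψ)` with `δ = ε/2`, the output `v` satisfies
`v ≤ val_Ψ` and `v ≥ (4/9 − ε)·val_Ψ`. -/
theorem alg_max2and_correct {n : ℕ} (Ψ : List (AndClause n))
    (ε δ B v : ℝ) (hε : ε ∈ Set.Ioo (0 : ℝ) 0.01) (hδ : δ = ε / 2)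
    (hB1 : (1 - δ) * bias Ψ ≤ B) (hB2 : B ≤ (1 + δ) * bias Ψ)
    (hv : v = if B ≤ (Ψ.length : ℝ) / 3 * (1 - δ)
              then 2 * ((Ψ.length : ℝ) + B) / (9 * (1 + δ))
              else B / (1 + δ)) :
    v ≤ (maxVal Ψ : ℝ) ∧ (4 / 9 - ε) * (maxVal Ψ : ℝ) ≤ v := by
  obtain ⟨hε0, hε1⟩ := hε
  obtain rfl : ε = 2 * δ := by linarith
  have hδ0 : 0 ≤ δ := by linarith
  have hδ1 : δ ≤ 2 / 9 := by norm_num at hε1; linarith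
  split_ifs at hv with hsmall <;> subst hv
  · exact estimate_bounds_of_le (Nat.cast_nonneg _) (bias_nonneg Ψ) (two_ninths_mul_le_maxVal Ψ)
      (two_mul_maxVal_le Ψ) hδ0 hδ1 hB1 hB2
  · exact estimate_bounds_of_lt (bias_nonneg Ψ) (bias_le_maxVal Ψ) (two_mul_maxVal_le Ψ) hδ0
      (by linarith) hB1 hB2 (not_le.mp hsmall)
end

section
/- For all real numbers x ≥ 0, y > 0, and a with 0 ≤ a ≤ y, (2x + 3y + x²/y − 2a) / (4(x + y) − 3a) ≥ √2/2. (Claim 6.5, labelled 'claimnew' in the paper.) -/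
/-! Clearing the denominators, the claim becomes the polynomial inequality
`√2 (4(x + y) − 3a) y ≤ 2 (x² + (2x + 3y − 2a) y)`, and the difference of the two sides is
`2 (x − (√2 − 1) y)² + (3√2 − 4) a y`, a sum of two nonnegative terms since `3√2 > 4`. -/

theorem sub_mul_eq_two_mul_sq_add_of_sq_eq_two {R : Type*} [CommRing R] {s : R} (hs : s ^ 2 = 2)
    (x y a : R) :
    2 * (x ^ 2 + (2 * x + 3 * y - 2 * a) * y) - s * (4 * (x + y) - 3 * a) * y
      = 2 * (x - (s - 1) * y) ^ 2 + (3 * s - 4) * a * y := by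
  linear_combination (-2 * y ^ 2) * hs

theorem four_div_three_le_sqrt_two : (4 : ℝ) / 3 ≤ Real.sqrt 2 :=
  Real.le_sqrt_of_sq_le (by norm_num)

theorem sqrt_two_mul_le_of_nonneg {x y a : ℝ} (hy : 0 ≤ y) (ha : 0 ≤ a) :
    Real.sqrt 2 * (4 * (x + y) - 3 * a) * y ≤ 2 * (x ^ 2 + (2 * x + 3 * y - 2 * a) * y) := by
  have hs : Real.sqrt 2 ^ 2 = 2 := Real.sq_sqrt zero_le_two
  have hcoef : 0 ≤ 3 * Real.sqrt 2 - 4 := by linarith [four_div_three_le_sqrt_two]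
  rw [← sub_nonneg, sub_mul_eq_two_mul_sq_add_of_sq_eq_two hs]
  positivity

/-- Claim 6.5 ("claimnew"): for `x ≥ 0`, `y > 0`, `0 ≤ a ≤ y`,
`(2x + 3y + x²/y − 2a) / (4(x + y) − 3a) ≥ √2/2`. -/
theorem claimnew (x y a : ℝ) (hx : 0 ≤ x) (hy : 0 < y) (ha : 0 ≤ a) (hay : a ≤ y) :
    Real.sqrt 2 / 2 ≤ (2 * x + 3 * y + x ^ 2 / y - 2 * a) / (4 * (x + y) - 3 * a) := by
  have hD : 0 < 4 * (x + y) - 3 * a := by linarith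
  have hnum : 2 * x + 3 * y + x ^ 2 / y - 2 * a = (x ^ 2 + (2 * x + 3 * y - 2 * a) * y) / y := by
    field_simp
    ring
  rw [div_le_div_iff₀ two_pos hD, hnum, div_mul_eq_mul_div, le_div_iff₀ hy, mul_comm _ (2 : ℝ)]
  exact sqrt_two_mul_le_of_nonneg hy.le ha
end

section
/- Let k ≥ 2, let m_1,…,m_k ≥ 0 be real numbers with D = Σ_{j=2}^k ((2^j − j − 1)/2^{j−2})·m_j > 0, let δ ∈ (0, 0.01), and let B be a real number with Σ_{j=1}^k ((2 − j)/2^{j−1})·m_j ≤ B ≤ (1−δ)·D. Then Σ_{j=1}^k (1 − 2^{−j})·m_j + B²/(4D) ≥ (√2/2)·Σ_{j=1}^k m_j. (Claim 6.3.) -/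
/-!
With `a = (√2 - 1)/2`, the term `B²/(4D)` dominates `a·B - a²·D` (AM-GM), and `B` is at least
the linear form with coefficients `(2 - j)/2^(j-1)`. It therefore suffices to bound the combined
coefficient of each `m_j` from below by `√2/2`; multiplied by `2^j` its excess over `√2/2` is
`(3√2 - 4)·(2^(j-1) - j) ≥ 0`, with equality for `j = 1, 2`.
-/

open Finset Real

lemma mul_sub_sq_mul_le_sq_div_four_mul (a B : ℝ) {D : ℝ} (hD : 0 < D) :
    a * B - a ^ 2 * D ≤ B ^ 2 / (4 * D) := by
  rw [le_div_iff₀ (by positivity)]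
  nlinarith [sq_nonneg (B - 2 * a * D)]

lemma four_lt_three_mul_sqrt_two : 4 < 3 * √2 := by
  nlinarith [sq_sqrt (zero_le_two : (0 : ℝ) ≤ 2), sqrt_nonneg 2]

lemma sqrt_two_div_two_le_coeff {j : ℕ} (hj : 1 ≤ j) :
    √2 / 2 ≤ (1 - 1 / (2 : ℝ) ^ j) + (√2 - 1) / 2 * (((2 : ℝ) - j) / 2 ^ (j - 1))
      - ((√2 - 1) / 2) ^ 2 * (((2 : ℝ) ^ j - j - 1) / 2 ^ (j - 2)) := by
  match j, hj with
  | 1, _ =>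
    norm_num
    linarith
  | n + 2, _ =>
    have hpow : (n : ℝ) + 2 ≤ 2 * 2 ^ n := by
      exact_mod_cast (Nat.lt_two_pow_self (n := n + 1)).trans_eq (pow_succ' 2 n)
    have hsq : √2 ^ 2 = 2 := sq_sqrt zero_le_two
    have ht : (0 : ℝ) < 2 ^ n := by positivity
    have hexcess : (1 - 1 / (2 : ℝ) ^ (n + 2))
          + (√2 - 1) / 2 * (((2 : ℝ) - (n + 2 : ℕ)) / 2 ^ (n + 2 - 1))
          - ((√2 - 1) / 2) ^ 2 * (((2 : ℝ) ^ (n + 2) - (n + 2 : ℕ) - 1) / 2 ^ (n + 2 - 2))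
          - √2 / 2
        = (3 * √2 - 4) * (2 * 2 ^ n - (n + 2)) / (4 * 2 ^ n) := by
      rw [show n + 2 - 1 = n + 1 by omega, show n + 2 - 2 = n by omega, pow_succ, pow_succ,
        pow_succ]
      push_cast
      generalize (2 : ℝ) ^ n = t at ht ⊢
      field_simp
      linear_combination (12 - 16 * t + 4 * (n : ℝ)) * hsq
    have hexcess_nonneg : 0 ≤ (3 * √2 - 4) * (2 * 2 ^ n - (n + 2)) / (4 * 2 ^ n) :=
      div_nonneg (mul_nonneg (by linarith [four_lt_three_mul_sqrt_two]) (by linarith))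
        (by positivity)
    linarith

lemma sum_Icc_one_eq_sum_Icc_two (k : ℕ) (m : ℕ → ℝ) :
    ∑ j ∈ Icc 1 k, (((2 : ℝ) ^ j - j - 1) / 2 ^ (j - 2)) * m j
      = ∑ j ∈ Icc 2 k, (((2 : ℝ) ^ j - j - 1) / 2 ^ (j - 2)) * m j := by
  refine (sum_subset (Icc_subset_Icc_left one_le_two) fun j hj hj' => ?_).symm
  obtain rfl : j = 1 := by simp only [mem_Icc] at hj hj'; omega
  norm_num

theorem claim_6_3_general (k : ℕ) (m : ℕ → ℝ)
    (hm : ∀ j ∈ Finset.Icc 1 k, 0 ≤ m j) (B D : ℝ)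
    (hD : D = ∑ j ∈ Finset.Icc 2 k, (((2 : ℝ) ^ j - (j : ℝ) - 1) / 2 ^ (j - 2)) * m j)
    (hDpos : 0 < D)
    (hB1 : ∑ j ∈ Finset.Icc 1 k, (((2 : ℝ) - (j : ℝ)) / 2 ^ (j - 1)) * m j ≤ B) :
    Real.sqrt 2 / 2 * ∑ j ∈ Finset.Icc 1 k, m j ≤
      ∑ j ∈ Finset.Icc 1 k, (1 - 1 / (2 : ℝ) ^ j) * m j + B ^ 2 / (4 * D) := by
  set a := (√2 - 1) / 2
  have ha : 0 ≤ a := div_nonneg (by linarith [four_lt_three_mul_sqrt_two]) zero_le_two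
  rw [← sum_Icc_one_eq_sum_Icc_two] at hD
  calc √2 / 2 * ∑ j ∈ Icc 1 k, m j
      ≤ ∑ j ∈ Icc 1 k, ((1 - 1 / (2 : ℝ) ^ j) + a * (((2 : ℝ) - j) / 2 ^ (j - 1))
          - a ^ 2 * (((2 : ℝ) ^ j - j - 1) / 2 ^ (j - 2))) * m j := by
        rw [mul_sum]
        exact sum_le_sum fun j hj =>
          mul_le_mul_of_nonneg_right (sqrt_two_div_two_le_coeff (mem_Icc.mp hj).1) (hm j hj)
    _ = ∑ j ∈ Icc 1 k, (1 - 1 / (2 : ℝ) ^ j) * m j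
          + a * ∑ j ∈ Icc 1 k, (((2 : ℝ) - j) / 2 ^ (j - 1)) * m j
          - a ^ 2 * D := by
        simp only [hD, mul_sum, ← sum_add_distrib, ← sum_sub_distrib]
        exact sum_congr rfl fun j _ => by ring
    _ ≤ ∑ j ∈ Icc 1 k, (1 - 1 / (2 : ℝ) ^ j) * m j + (a * B - a ^ 2 * D) := by
        linarith [mul_le_mul_of_nonneg_left hB1 ha]
    _ ≤ _ := by grw [mul_sub_sq_mul_le_sq_div_four_mul a B hDpos]

/-- Claim 6.3: for `k ≥ 2`, nonnegative reals `m_1, …, m_k` with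
`D = Σ_{j=2}^k ((2^j − j − 1)/2^{j−2})·m_j > 0`, `δ ∈ (0, 0.01)`, and
`Σ_{j=1}^k ((2 − j)/2^{j−1})·m_j ≤ B ≤ (1 − δ)·D`, we have
`Σ_{j=1}^k (1 − 2^{−j})·m_j + B²/(4D) ≥ (√2/2)·Σ_{j=1}^k m_j`. -/
theorem claim_6_3 (k : ℕ) (hk : 2 ≤ k) (m : ℕ → ℝ)
    (hm : ∀ j ∈ Finset.Icc 1 k, 0 ≤ m j) (δ B D : ℝ)
    (hδ : δ ∈ Set.Ioo (0 : ℝ) 0.01)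
    (hD : D = ∑ j ∈ Finset.Icc 2 k, (((2 : ℝ) ^ j - (j : ℝ) - 1) / 2 ^ (j - 2)) * m j)
    (hDpos : 0 < D)
    (hB1 : ∑ j ∈ Finset.Icc 1 k, (((2 : ℝ) - (j : ℝ)) / 2 ^ (j - 1)) * m j ≤ B)
    (hB2 : B ≤ (1 - δ) * D) :
    Real.sqrt 2 / 2 * ∑ j ∈ Finset.Icc 1 k, m j ≤
      ∑ j ∈ Finset.Icc 1 k, (1 - 1 / (2 : ℝ) ^ j) * m j + B ^ 2 / (4 * D) :=
  claim_6_3_general k m hm B D hD hDpos hB1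
end
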